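/- arXiv:2409.10885 — 2 statements merged into one kernel-verified Lean document; each statement's English description precedes it below -/
import Mathlib

section
/- Let $j, m$ be natural numbers with $m \geq 1$ and $j \geq 5m$. Let $S$ be a finite set with $|S| = j + m$, let $P$ be a partition of $S$ into nonempty blocks, and let $M$ be a subset of the blocks of $P$ with $|M| = j - m$ (the "marked" blocks). Then at least $m + 1$ of the blocks in $M$ are singletons (blocks of cardinality exactly $1$). -/
/-! A block of size `≠ 1` has at least two elements, so counting `|M|` blocks with weight two
overshoots their total size by at most the number `s` of marked singletons:
`2 (j - m) ≤ (j + m) + s`, that is `s ≥ j - 3m ≥ 2m ≥ m + 1`. -/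

open Finset

theorem Finpartition.sum_card_le_card_of_subset {α : Type*} [DecidableEq α] {S : Finset α}
    (P : Finpartition S) {M : Finset (Finset α)} (hM : M ⊆ P.parts) :
    ∑ b ∈ M, #b ≤ #S :=
  P.sum_card_parts ▸ sum_le_sum_of_subset hM

theorem two_mul_card_le_sum_card_add_card_filter_card_eq_one {α : Type*}
    {M : Finset (Finset α)} (hM : ∀ b ∈ M, b.Nonempty) :
    2 * #M ≤ ∑ b ∈ M, #b + #{b ∈ M | #b = 1} := by
  rw [card_filter, ← sum_add_distrib, mul_comm, ← smul_eq_mul, ← sum_const]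
  refine sum_le_sum fun b hb => ?_
  have := (hM b hb).card_pos
  split_ifs <;> omega

/-- If `j ≥ 5m` with `m ≥ 1`, `S` is a finite set with `|S| = j + m`, `P` is a
partition of `S` into nonempty blocks, and `M` is a set of `j - m` "marked"
blocks of `P`, then at least `m + 1` of the marked blocks are singletons. -/
theorem marked_singletons_of_partition {α : Type*} [DecidableEq α]
    (j m : ℕ) (hm : 1 ≤ m) (hj : 5 * m ≤ j)
    (S : Finset α) (hS : S.card = j + m)
    (P : Finpartition S) (M : Finset (Finset α)) (hM : M ⊆ P.parts)
    (hMcard : M.card = j - m) :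
    m + 1 ≤ (M.filter fun b => b.card = 1).card := by
  have hsize := P.sum_card_le_card_of_subset hM
  have hcount := two_mul_card_le_sum_card_add_card_filter_card_eq_one
    fun b hb => P.nonempty_of_mem_parts (hM hb)
  omega
end

section
/- Let $j, m$ be natural numbers with $m \geq 1$ and $j \geq 5m$. Let $L$ and $R$ be disjoint finite sets with $|L| = j$ and $|R| = m$, let $P$ be a partition of $S = L \cup R$ into nonempty blocks, and let $M$ be a subset of the blocks of $P$ with $|M| = j - m$ (the "marked" blocks). Then there exists a marked block that is a singleton contained in $L$. -/
/-!
The blocks of `P` have total size `|L ∪ R| ≤ j + m`, and each block has size at least one, at least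
two if it is not a singleton; so `P` has at most `2m` non-singleton blocks besides its at least
`j - m` blocks. Hence at least `j - 3m > m` marked blocks are singletons, and at most `m` of them can
lie in `R`.
-/

open Finset

namespace Finpartition

variable {α : Type*} [DecidableEq α] {s : Finset α} (P : Finpartition s)

theorem card_parts_add_card_filter_one_lt_le :
    #P.parts + #{b ∈ P.parts | 1 < #b} ≤ #s := by
  rw [card_filter, ← P.sum_card_parts, card_eq_sum_ones, ← sum_add_distrib]
  refine sum_le_sum fun b hb => ?_
  have : 0 < #b := card_pos.2 (P.nonempty_of_mem_parts hb)
  split_ifs <;> omega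

theorem card_le_card_filter_card_eq_one_add {M : Finset (Finset α)} (hM : M ⊆ P.parts) :
    #M ≤ #{b ∈ M | #b = 1} + #{b ∈ P.parts | 1 < #b} := by
  have hnontrivial : {b ∈ M | ¬#b = 1} ⊆ {b ∈ P.parts | 1 < #b} := by
    intro b hb
    rw [mem_filter] at hb ⊢
    have : 0 < #b := card_pos.2 (P.nonempty_of_mem_parts (hM hb.1))
    exact ⟨hM hb.1, by omega⟩
  rw [← card_filter_add_card_filter_not (s := M) (fun b => #b = 1)]
  exact Nat.add_le_add_left (card_le_card hnontrivial) _

end Finpartition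

theorem Finset.exists_mem_eq_singleton_of_card_lt {α : Type*} [DecidableEq α]
    {s t : Finset α} {F : Finset (Finset α)} (hF : ∀ b ∈ F, ∃ a ∈ s ∪ t, b = {a})
    (hcard : #t < #F) : ∃ b ∈ F, ∃ a ∈ s, b = {a} := by
  by_contra! h
  have hsub : F ⊆ t.image singleton := by
    intro b hb
    obtain ⟨a, ha, rfl⟩ := hF b hb
    have ht : a ∈ t := (mem_union.1 ha).resolve_left fun has => h _ hb a has rfl
    exact mem_image_of_mem _ ht
  exact (card_le_card hsub |>.trans card_image_le).not_gt hcard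

theorem exists_marked_singleton_in_left_general {α : Type*} [DecidableEq α]
    (j m : ℕ) (hm : 1 ≤ m) (hj : 5 * m ≤ j)
    (L R : Finset α) (hL : L.card = j) (hR : R.card = m)
    (P : Finpartition (L ∪ R)) (M : Finset (Finset α)) (hM : M ⊆ P.parts)
    (hMcard : M.card = j - m) :
    ∃ b ∈ M, ∃ a ∈ L, b = {a} := by
  have hparts := P.card_parts_add_card_filter_one_lt_le
  have hmarked := P.card_le_card_filter_card_eq_one_add hM
  have hunion : #(L ∪ R) ≤ j + m := hL ▸ hR ▸ card_union_le L R
  have hMparts : #M ≤ #P.parts := card_le_card hM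
  have hsingletons : #R < #{b ∈ M | #b = 1} := by omega
  have hF : ∀ b ∈ {b ∈ M | #b = 1}, ∃ a ∈ L ∪ R, b = {a} := by
    intro b hb
    rw [mem_filter] at hb
    obtain ⟨a, rfl⟩ := card_eq_one.1 hb.2
    exact ⟨a, P.le (hM hb.1) (mem_singleton_self a), rfl⟩
  obtain ⟨b, hb, hbL⟩ := exists_mem_eq_singleton_of_card_lt hF hsingletons
  exact ⟨b, (mem_filter.1 hb).1, hbL⟩

/-- If `j ≥ 5m` with `m ≥ 1`, `L` and `R` are disjoint finite sets with
`|L| = j` and `|R| = m`, `P` is a partition of `L ∪ R`, and `M` is a set of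
`j - m` marked blocks of `P`, then some marked block is a singleton contained
in `L`. -/
theorem exists_marked_singleton_in_left {α : Type*} [DecidableEq α]
    (j m : ℕ) (hm : 1 ≤ m) (hj : 5 * m ≤ j)
    (L R : Finset α) (hdisj : Disjoint L R) (hL : L.card = j) (hR : R.card = m)
    (P : Finpartition (L ∪ R)) (M : Finset (Finset α)) (hM : M ⊆ P.parts)
    (hMcard : M.card = j - m) :
    ∃ b ∈ M, ∃ a ∈ L, b = {a} :=
  exists_marked_singleton_in_left_general j m hm hj L R hL hR P M hM hMcard
end
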